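/- A non-decreasing sequence of positive integers d_1 ≤ d_2 ≤ ... ≤ d_k with d_k ≤ n = n_1 + ... + n_t is a subsequence of the sequence (d_1(𝕄), ..., d_{dim 𝕄}(𝕄)) of generalized sum-rank weights of 𝕄 if and only if for all j ∈ [t] and all r ∈ [k − m_j], the inequality d_{r+m_j} > n_1 + ... + n_{j−1} implies d_{r+m_j} ≥ d_r + 1. -/
import Mathlib


open Module

variable {F : Type*} [Field F] [Fintype F] {t : ℕ} {m n : Fin t → ℕ}

/-- The sum-rank weight of an element of `𝕄 = F^{m 0 × n 0} × ⋯ × F^{m (t-1) × n (t-1)}`. -/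
noncomputable def srk (C : ∀ i : Fin t, Matrix (Fin (m i)) (Fin (n i)) F) : ℕ :=
  ∑ i, (C i).rank

/-- The maximum sum-rank of a code. -/
noncomputable def maxsrk (𝒞 : Submodule F (∀ i : Fin t, Matrix (Fin (m i)) (Fin (n i)) F)) : ℕ :=
  sSup {w | ∃ C ∈ 𝒞, srk C = w}

/-- The minimum distance of a code. -/
noncomputable def minDist (𝒞 : Submodule F (∀ i : Fin t, Matrix (Fin (m i)) (Fin (n i)) F)) : ℕ :=
  sInf {w | ∃ C ∈ 𝒞, C ≠ 0 ∧ srk C = w}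

/-- The maximum rank of a subspace of a matrix space. -/
noncomputable def maxrank {a b : ℕ} (𝒜 : Submodule F (Matrix (Fin a) (Fin b) F)) : ℕ :=
  sSup {w | ∃ A ∈ 𝒜, A.rank = w}

/-- Optimal anticodes in a single matrix space. -/
def IsOptAnticode {a b : ℕ} (𝒜 : Submodule F (Matrix (Fin a) (Fin b) F)) : Prop :=
  Module.finrank F 𝒜 = a * maxrank 𝒜

/-- The weight of a sum-rank metric code: the minimum of `maxsrk` over products of
optimal anticodes containing it. -/
noncomputable def codeWt (𝒞 : Submodule F (∀ i : Fin t, Matrix (Fin (m i)) (Fin (n i)) F)) : ℕ :=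
  sInf {w | ∃ 𝒜 : ∀ i : Fin t, Submodule F (Matrix (Fin (m i)) (Fin (n i)) F),
    (∀ i, IsOptAnticode (𝒜 i)) ∧ 𝒞 ≤ Submodule.pi Set.univ 𝒜 ∧
      maxsrk (Submodule.pi Set.univ 𝒜) = w}

/-- The `r`-th generalized sum-rank weight of a code. -/
noncomputable def gw (𝒞 : Submodule F (∀ i : Fin t, Matrix (Fin (m i)) (Fin (n i)) F))
    (r : ℕ) : ℕ :=
  sInf {w | ∃ 𝒟 : Submodule F (∀ i : Fin t, Matrix (Fin (m i)) (Fin (n i)) F),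
    𝒟 ≤ 𝒞 ∧ r ≤ Module.finrank F 𝒟 ∧ codeWt 𝒟 = w}

/-- `d` is a subsequence of `e`. -/
def IsSubseq {k K : ℕ} (d : Fin k → ℕ) (e : Fin K → ℕ) : Prop :=
  ∃ φ : Fin k → Fin K, StrictMono φ ∧ ∀ r, d r = e (φ r)


open Finset

/-- Abel-summation style key inequality. -/
lemma abel_key (a u w : ℕ → ℕ) (ha : ∀ i, a (i + 1) ≤ a i) :
    ∀ T, (∀ j < T, ∑ i ∈ range (j + 1), u i ≤ ∑ i ∈ range (j + 1), w i) →
      ∑ i ∈ range T, a i * u i + a T * ∑ i ∈ range T, w i ≤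
        ∑ i ∈ range T, a i * w i + a T * ∑ i ∈ range T, u i := by
  intro T
  induction T with
  | zero => simp
  | succ T ih =>
    intro h
    have hUW : ∑ i ∈ range (T + 1), u i ≤ ∑ i ∈ range (T + 1), w i :=
      h T (Nat.lt_succ_self T)
    have ihh := ih (fun j hj => h j (hj.trans (Nat.lt_succ_self T)))
    rw [sum_range_succ, sum_range_succ, sum_range_succ, sum_range_succ]
    rw [sum_range_succ, sum_range_succ] at hUW
    set A := ∑ i ∈ range T, a i * u i
    set B := ∑ i ∈ range T, a i * w i
    set U := ∑ i ∈ range T, u i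
    set W := ∑ i ∈ range T, w i
    -- key: a T * (U + u T) + a (T+1) * (W + w T) ≤ a T * (W + w T) + a (T+1) * (U + u T)
    have h1 : a (T + 1) ≤ a T := ha T
    have e1 : a (T + 1) * (U + u T) ≤ a T * (U + u T) := Nat.mul_le_mul_right _ h1
    have e2 : a (T + 1) * (W + w T) ≤ a T * (W + w T) := Nat.mul_le_mul_right _ h1
    have e3 : a T * (U + u T) - a (T + 1) * (U + u T) ≤
        a T * (W + w T) - a (T + 1) * (W + w T) := by
      rw [← Nat.sub_mul, ← Nat.sub_mul]
      exact Nat.mul_le_mul_left _ hUW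
    have e4 : a T * U + a T * u T = a T * (U + u T) := by ring
    have e5 : a T * W + a T * w T = a T * (W + w T) := by ring
    omega

lemma abel_nat (a u w : ℕ → ℕ) (ha : ∀ i, a (i + 1) ≤ a i) (T : ℕ)
    (h : ∀ j < T, ∑ i ∈ range (j + 1), u i ≤ ∑ i ∈ range (j + 1), w i) :
    ∑ i ∈ range T, a i * u i ≤ ∑ i ∈ range T, a i * w i := by
  have k := abel_key a u w ha T h
  rcases Nat.eq_zero_or_pos T with hT | hT
  · simp [hT]
  · have hUW : ∑ i ∈ range T, u i ≤ ∑ i ∈ range T, w i := by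
      have := h (T - 1) (by omega)
      rwa [Nat.sub_add_cancel hT] at this
    have : a T * ∑ i ∈ range T, u i ≤ a T * ∑ i ∈ range T, w i :=
      Nat.mul_le_mul_left _ hUW
    omega
section Comb

open Finset

variable {t : ℕ} (m n : Fin t → ℕ)

/-- `n` extended to `ℕ` by zero. -/
def nnf : ℕ → ℕ := fun i => if h : i < t then n ⟨i, h⟩ else 0

def mmf : ℕ → ℕ := fun i => if h : i < t then m ⟨i, h⟩ else 0

/-- Partial sums of `n`. -/
def NPf : ℕ → ℕ := fun a => ∑ i ∈ range a, nnf n i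

/-- The cumulative multiplicity function. -/
def cf : ℕ → ℕ := fun v => ∑ i ∈ range t, mmf m i * (min v (NPf n (i + 1)) - min v (NPf n i))

/-- Inverse of `cf`: the `s`-th generalized weight of the ambient space. -/
noncomputable def lvf : ℕ → ℕ := fun s => sInf {v | s ≤ cf m n v}

variable {m n}

lemma NPf_mono : Monotone (NPf n) := fun a b hab =>
  Finset.sum_le_sum_of_subset (Finset.range_subset_range.2 hab)

lemma NPf_succ (a : ℕ) : NPf n (a + 1) = NPf n a + nnf n a := Finset.sum_range_succ _ _

lemma NPf_zero : NPf n 0 = 0 := rfl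

lemma NPf_stab {a : ℕ} (ha : t ≤ a) : NPf n a = NPf n t := by
  induction a, ha using Nat.le_induction with
  | base => rfl
  | succ a ha ih => rw [NPf_succ, ih, nnf, dif_neg (by omega), Nat.add_zero]

lemma sum_fin_eq_range (f : Fin t → ℕ) :
    ∑ i, f i = ∑ i ∈ range t, (if h : i < t then f ⟨i, h⟩ else 0) := by
  rw [← Fin.sum_univ_eq_sum_range]
  exact Finset.sum_congr rfl fun i _ => by simp [i.isLt]

lemma sum_n_eq_NPf : ∑ i, n i = NPf n t := sum_fin_eq_range n

lemma NPf_eq_Iio (j : Fin t) : ∑ i ∈ Finset.Iio j, n i = NPf n j.1 := by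
  refine Finset.sum_nbij' (fun i => i.1) (fun x => if h : x < t then ⟨x, h⟩ else j) ?_ ?_ ?_ ?_ ?_
  · intro a ha
    simp only [Finset.mem_Iio, Fin.lt_def] at ha
    simpa using ha
  · intro a ha
    simp only [Finset.mem_range] at ha
    have hat : a < t := lt_trans ha j.isLt
    simp [hat, Finset.mem_Iio, Fin.lt_def, ha]
  · intro a ha
    simp only [Finset.mem_Iio, Fin.lt_def] at ha
    simp [lt_trans ha j.isLt]
  · intro a ha
    simp only [Finset.mem_range] at ha
    simp [lt_trans ha j.isLt]
  · intro a ha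
    simp only [Finset.mem_Iio, Fin.lt_def] at ha
    simp [nnf, lt_trans ha j.isLt]

lemma cf_zero : cf m n 0 = 0 := by simp [cf]

lemma cf_mono : Monotone (cf m n) := by
  intro v v' hvv
  refine Finset.sum_le_sum fun i _ => Nat.mul_le_mul_left _ ?_
  have h1 : NPf n i ≤ NPf n (i + 1) := NPf_mono (Nat.le_succ _)
  have h2 : min v (NPf n i) ≤ min v' (NPf n i) := by omega
  omega

lemma cf_top : cf m n (NPf n t) = ∑ i ∈ range t, mmf m i * nnf n i := by
  refine Finset.sum_congr rfl fun i hi => ?_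
  simp only [Finset.mem_range] at hi
  congr 1
  have h1 : NPf n (i + 1) ≤ NPf n t := NPf_mono hi
  have h2 : NPf n i ≤ NPf n (i + 1) := NPf_mono (Nat.le_succ _)
  have h3 : NPf n (i + 1) = NPf n i + nnf n i := NPf_succ _
  omega

lemma cf_succ {v jj : ℕ} (hjj : jj < t) (h1 : NPf n jj ≤ v) (h2 : v < NPf n (jj + 1)) :
    cf m n (v + 1) = cf m n v + m ⟨jj, hjj⟩ := by
  have key : ∀ i ∈ range t,
      mmf m i * (min (v + 1) (NPf n (i + 1)) - min (v + 1) (NPf n i)) =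
        mmf m i * (min v (NPf n (i + 1)) - min v (NPf n i)) +
          (if i = jj then mmf m i else 0) := by
    intro i hi
    simp only [Finset.mem_range] at hi
    rcases lt_trichotomy i jj with hlt | heq | hgt
    · have hA : NPf n (i + 1) ≤ NPf n jj := NPf_mono hlt
      have hB : NPf n i ≤ NPf n (i + 1) := NPf_mono (Nat.le_succ _)
      rw [if_neg (by omega)]
      have e1 : min (v + 1) (NPf n (i + 1)) = NPf n (i + 1) := by omega
      have e2 : min v (NPf n (i + 1)) = NPf n (i + 1) := by omega
      have e3 : min (v + 1) (NPf n i) = NPf n i := by omega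
      have e4 : min v (NPf n i) = NPf n i := by omega
      rw [e1, e2, e3, e4]; omega
    · subst heq
      rw [if_pos rfl]
      have e1 : min (v + 1) (NPf n (i + 1)) = v + 1 := by omega
      have e2 : min v (NPf n (i + 1)) = v := by omega
      have e3 : min (v + 1) (NPf n i) = NPf n i := by omega
      have e4 : min v (NPf n i) = NPf n i := by omega
      rw [e1, e2, e3, e4, show v + 1 - NPf n i = (v - NPf n i) + 1 by omega, Nat.mul_succ]
    · have hA : NPf n (jj + 1) ≤ NPf n i := NPf_mono hgt
      have hB : NPf n i ≤ NPf n (i + 1) := NPf_mono (Nat.le_succ _)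
      rw [if_neg (by omega)]
      have e1 : min (v + 1) (NPf n (i + 1)) = v + 1 := by omega
      have e2 : min v (NPf n (i + 1)) = v := by omega
      have e3 : min (v + 1) (NPf n i) = v + 1 := by omega
      have e4 : min v (NPf n i) = v := by omega
      rw [e1, e2, e3, e4]; simp
  rw [cf, Finset.sum_congr rfl key, Finset.sum_add_distrib, Finset.sum_ite_eq' (range t)]
  rw [if_pos (Finset.mem_range.2 hjj)]
  simp [cf, mmf, hjj]

lemma exists_block {v : ℕ} (h1 : 1 ≤ v) (h2 : v ≤ NPf n t) :
    ∃ jj, ∃ hjj : jj < t, NPf n jj < v ∧ v ≤ NPf n (jj + 1) := by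
  suffices h : ∀ a, v ≤ NPf n a → ∃ jj < a, NPf n jj < v ∧ v ≤ NPf n (jj + 1) by
    obtain ⟨jj, hjja, hl, hr⟩ := h t h2
    refine ⟨jj, ?_, hl, hr⟩
    by_contra hge
    rw [NPf_succ, nnf, dif_neg hge] at hr
    omega
  intro a
  induction a with
  | zero => rw [NPf_zero]; omega
  | succ a ih =>
    intro hv
    rcases le_or_gt v (NPf n a) with h | h
    · obtain ⟨jj, h1, h2, h3⟩ := ih h
      exact ⟨jj, h1.trans (Nat.lt_succ_self a), h2, h3⟩
    · exact ⟨a, Nat.lt_succ_self a, h, hv⟩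

end Comb
section Comb2

open Finset

variable {t : ℕ} {m n : Fin t → ℕ}

lemma telescope_min (V a : ℕ) :
    ∑ i ∈ range a, (min V (NPf n (i + 1)) - min V (NPf n i)) = min V (NPf n a) := by
  rw [Finset.sum_range_tsub (f := fun i => min V (NPf n i))
    (fun i j hij => le_min (min_le_left _ _)
      (le_trans (min_le_right _ _) (NPf_mono hij)))]
  simp [NPf_zero]

lemma mmf_anti (hm_mono : ∀ i j : Fin t, i ≤ j → m j ≤ m i) (i : ℕ) :
    mmf m (i + 1) ≤ mmf m i := by
  by_cases h1 : i + 1 < t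
  · have h0 : i < t := by omega
    simp only [mmf, dif_pos h1, dif_pos h0]
    exact hm_mono ⟨i, h0⟩ ⟨i + 1, h1⟩ (by rw [Fin.mk_le_mk]; omega)
  · simp [mmf, h1]

/-- The greedy bound: any admissible `u` satisfies `∑ mᵢ uᵢ ≤ cf (∑ uᵢ)`. -/
lemma greedy_bound (hm_mono : ∀ i j : Fin t, i ≤ j → m j ≤ m i)
    (u : Fin t → ℕ) (hu : ∀ i, u i ≤ n i) :
    ∑ i, m i * u i ≤ cf m n (∑ i, u i) := by
  set V := ∑ i, u i with hV
  set uu : ℕ → ℕ := fun i => if h : i < t then u ⟨i, h⟩ else 0 with huu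
  have bridge1 : ∑ i, m i * u i = ∑ i ∈ range t, mmf m i * uu i := by
    rw [sum_fin_eq_range (fun i => m i * u i)]
    refine sum_congr rfl fun i hi => ?_
    simp only [mem_range] at hi
    simp [mmf, huu, hi]
  have bridgeu : V = ∑ i ∈ range t, uu i := sum_fin_eq_range u
  rw [bridge1, cf]
  refine abel_nat _ _ _ (mmf_anti hm_mono) t fun j hj => ?_
  rw [telescope_min]
  refine le_min ?_ ?_
  · rw [bridgeu]
    exact Finset.sum_le_sum_of_subset (Finset.range_subset_range.2 (by omega))
  · rw [NPf]
    refine Finset.sum_le_sum fun i _ => ?_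
    by_cases h : i < t
    · simp only [huu, nnf, dif_pos h]; exact hu _
    · simp [huu, nnf, h]

end Comb2
section LinAlg

open Module Finset

variable {F : Type*} [Field F]

/-- Extend an `a × u` matrix to an `a × b` matrix by zero columns. -/
def extCols {a b u : ℕ} : Matrix (Fin a) (Fin u) F →ₗ[F] Matrix (Fin a) (Fin b) F where
  toFun M := Matrix.of fun i j => if h : (j : ℕ) < u then M i ⟨j.1, h⟩ else 0
  map_add' M N := by
    ext i j
    by_cases h : (j : ℕ) < u <;> simp [h]
  map_smul' c M := by
    ext i j
    by_cases h : (j : ℕ) < u <;> simp [h]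

lemma extCols_injective {a b u : ℕ} (hub : u ≤ b) :
    Function.Injective (extCols (F := F) (a := a) (b := b) (u := u)) := by
  intro M N hMN
  ext i k
  have := congrFun (congrFun hMN i) (Fin.castLE hub k)
  simpa [extCols, k.isLt, Fin.castLE] using this

lemma extCols_eq_mul {a b u : ℕ} (hub : u ≤ b) (M : Matrix (Fin a) (Fin u) F) :
    extCols (b := b) M =
      M * Matrix.of (fun (k : Fin u) (j : Fin b) => if (j : ℕ) = (k : ℕ) then (1 : F) else 0) := by
  ext i j
  rw [Matrix.mul_apply]
  by_cases h : (j : ℕ) < u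
  · rw [Finset.sum_eq_single ⟨j.1, h⟩]
    · simp [extCols, h]
    · intro k _ hk
      have : ¬ ((j : ℕ) = (k : ℕ)) := fun he => hk (Fin.ext he.symm)
      simp [this]
    · simp
  · rw [Finset.sum_eq_zero]
    · simp [extCols, h]
    · intro k _
      have : ¬ ((j : ℕ) = (k : ℕ)) := by have := k.isLt; omega
      simp [this]

lemma rank_extCols_le {a b u : ℕ} (hub : u ≤ b) (M : Matrix (Fin a) (Fin u) F) :
    (extCols (b := b) M).rank ≤ u := by
  rw [extCols_eq_mul hub]
  exact le_trans (Matrix.rank_mul_le_left _ _) (Matrix.rank_le_width M)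

/-- The rectangular identity has full rank after extension. -/
lemma rank_extCols_id {a b u : ℕ} (hua : u ≤ a) (hub : u ≤ b) :
    (extCols (b := b) (Matrix.of fun (i : Fin a) (k : Fin u) =>
      if (i : ℕ) = (k : ℕ) then (1 : F) else 0)).rank = u := by
  set E := extCols (b := b) (Matrix.of fun (i : Fin a) (k : Fin u) =>
      if (i : ℕ) = (k : ℕ) then (1 : F) else 0) with hE
  refine le_antisymm (rank_extCols_le hub _) ?_
  have hsub : E.submatrix (Fin.castLE hua) (Fin.castLE hub) = (1 : Matrix (Fin u) (Fin u) F) := by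
    ext k l
    by_cases h : k = l
    · subst h
      simp [hE, extCols, Matrix.one_apply, k.isLt, Fin.castLE]
    · have h2 : ¬ ((k : ℕ) = (l : ℕ)) := fun he => h (by ext; exact he)
      simp [hE, extCols, Matrix.one_apply, l.isLt, Fin.castLE, h2, h]
  have step1 : ((1 : Matrix (Fin a) (Fin a) F).submatrix (Fin.castLE hua) (Equiv.refl (Fin a))) * E
      = E.submatrix (Fin.castLE hua) id := by
    rw [Matrix.one_submatrix_mul]
    rfl
  have step2 : (E.submatrix (Fin.castLE hua) id) *
      ((1 : Matrix (Fin b) (Fin b) F).submatrix (Equiv.refl (Fin b)) (Fin.castLE hub))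
      = E.submatrix (Fin.castLE hua) (Fin.castLE hub) := by
    rw [Matrix.mul_submatrix_one]
    rfl
  have : (((1 : Matrix (Fin a) (Fin a) F).submatrix (Fin.castLE hua) (Equiv.refl (Fin a))) * E *
      ((1 : Matrix (Fin b) (Fin b) F).submatrix (Equiv.refl (Fin b)) (Fin.castLE hub))).rank = u := by
    rw [step1, step2, hsub, Matrix.rank_one, Fintype.card_fin]
  calc u = _ := this.symm
    _ ≤ (((1 : Matrix (Fin a) (Fin a) F).submatrix (Fin.castLE hua) (Equiv.refl (Fin a))) * E).rank :=
        Matrix.rank_mul_le_left _ _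
    _ ≤ E.rank := Matrix.rank_mul_le_right _ _

end LinAlg
section LinAlg2

open Module Finset

variable {F : Type*} [Field F] [Fintype F] {t : ℕ} {m n : Fin t → ℕ}

section MaxRank

variable {a b : ℕ} (𝒜 : Submodule F (Matrix (Fin a) (Fin b) F))

lemma rankSet_nonempty : {w | ∃ A ∈ 𝒜, A.rank = w}.Nonempty :=
  ⟨0, 0, zero_mem _, Matrix.rank_zero⟩

lemma rankSet_bddAbove : BddAbove {w | ∃ A ∈ 𝒜, A.rank = w} :=
  ⟨b, fun _ ⟨A, _, hA⟩ => hA ▸ Matrix.rank_le_width A⟩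

lemma exists_rank_eq_maxrank : ∃ A ∈ 𝒜, A.rank = maxrank 𝒜 :=
  Nat.sSup_mem (rankSet_nonempty 𝒜) (rankSet_bddAbove 𝒜)

lemma rank_le_maxrank {A : Matrix (Fin a) (Fin b) F} (hA : A ∈ 𝒜) : A.rank ≤ maxrank 𝒜 :=
  le_csSup (rankSet_bddAbove 𝒜) ⟨A, hA, rfl⟩

lemma maxrank_le_width : maxrank 𝒜 ≤ b :=
  csSup_le (rankSet_nonempty 𝒜) fun _ ⟨A, _, hA⟩ => hA ▸ Matrix.rank_le_width A

end MaxRank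

/-- The product of submodules is linearly equivalent to the pi type of the submodules. -/
def piSubEquiv {ι : Type*} {M : ι → Type*} [∀ i, AddCommGroup (M i)] [∀ i, Module F (M i)]
    (p : ∀ i, Submodule F (M i)) : (Submodule.pi Set.univ p) ≃ₗ[F] (∀ i, p i) where
  toFun x := fun i => ⟨x.1 i, x.2 i (Set.mem_univ i)⟩
  map_add' x y := rfl
  map_smul' c x := rfl
  invFun y := ⟨fun i => (y i).1, fun i _ => (y i).2⟩
  left_inv x := rfl
  right_inv y := rfl

lemma finrank_pi_submodule {ι : Type*} [Fintype ι] {M : ι → Type*} [∀ i, AddCommGroup (M i)]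
    [∀ i, Module F (M i)] [∀ i, Module.Finite F (M i)] (p : ∀ i, Submodule F (M i)) :
    finrank F (Submodule.pi Set.univ p) = ∑ i, finrank F (p i) :=
  (piSubEquiv p).finrank_eq.trans (Module.finrank_pi_fintype F)

lemma maxsrk_pi (𝒜 : ∀ i : Fin t, Submodule F (Matrix (Fin (m i)) (Fin (n i)) F)) :
    maxsrk (Submodule.pi Set.univ 𝒜) = ∑ i, maxrank (𝒜 i) := by
  have hbdd : BddAbove {w | ∃ C ∈ Submodule.pi Set.univ 𝒜, srk C = w} :=
    ⟨∑ i, n i, fun w ⟨C, _, hC⟩ =>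
      hC ▸ Finset.sum_le_sum fun i _ => Matrix.rank_le_width (C i)⟩
  choose A hA hA2 using fun i => exists_rank_eq_maxrank (𝒜 i)
  have hmem : (fun i => A i) ∈ Submodule.pi Set.univ 𝒜 := fun i _ => hA i
  refine le_antisymm (csSup_le ⟨srk (fun i => A i), ⟨_, hmem, rfl⟩⟩ ?_) (le_csSup hbdd ?_)
  · rintro w ⟨C, hC, rfl⟩
    exact Finset.sum_le_sum fun i _ => rank_le_maxrank _ (hC i (Set.mem_univ i))
  · exact ⟨fun i => A i, hmem, Finset.sum_congr rfl fun i _ => hA2 i⟩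

lemma maxrank_top {a b : ℕ} (hba : b ≤ a) :
    maxrank (⊤ : Submodule F (Matrix (Fin a) (Fin b) F)) = b := by
  refine le_antisymm (maxrank_le_width _) (le_csSup (rankSet_bddAbove _) ?_)
  exact ⟨extCols (Matrix.of fun (i : Fin a) (k : Fin b) => if (i : ℕ) = (k : ℕ) then 1 else 0),
    trivial, rank_extCols_id hba le_rfl⟩

lemma isOptAnticode_top {a b : ℕ} (hba : b ≤ a) :
    IsOptAnticode (⊤ : Submodule F (Matrix (Fin a) (Fin b) F)) := by
  rw [IsOptAnticode, maxrank_top hba, finrank_top, Module.finrank_matrix]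
  simp

lemma exists_optAnticode (a b u : ℕ) (hua : u ≤ a) (hub : u ≤ b) :
    ∃ 𝒜 : Submodule F (Matrix (Fin a) (Fin b) F),
      IsOptAnticode 𝒜 ∧ maxrank 𝒜 = u ∧ finrank F 𝒜 = a * u := by
  refine ⟨LinearMap.range (extCols (F := F) (a := a) (b := b) (u := u)), ?hopt, ?hmax, ?hfr⟩
  case hfr =>
    rw [LinearMap.finrank_range_of_inj (extCols_injective hub), Module.finrank_matrix]
    simp
  case hmax =>
    refine le_antisymm (csSup_le (rankSet_nonempty _) ?_) (le_csSup (rankSet_bddAbove _) ?_)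
    · rintro w ⟨A, ⟨M, rfl⟩, rfl⟩
      exact rank_extCols_le hub M
    · exact ⟨extCols (Matrix.of fun (i : Fin a) (k : Fin u) =>
        if (i : ℕ) = (k : ℕ) then 1 else 0), ⟨_, rfl⟩, rank_extCols_id hua hub⟩
  case hopt =>
    rw [IsOptAnticode]
    have h1 : maxrank (LinearMap.range (extCols (F := F) (a := a) (b := b) (u := u))) = u := by
      refine le_antisymm (csSup_le (rankSet_nonempty _) ?_) (le_csSup (rankSet_bddAbove _) ?_)
      · rintro w ⟨A, ⟨M, rfl⟩, rfl⟩
        exact rank_extCols_le hub M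
      · exact ⟨extCols (Matrix.of fun (i : Fin a) (k : Fin u) =>
          if (i : ℕ) = (k : ℕ) then 1 else 0), ⟨_, rfl⟩, rank_extCols_id hua hub⟩
    rw [h1, LinearMap.finrank_range_of_inj (extCols_injective hub), Module.finrank_matrix]
    simp

end LinAlg2
section GwTop

open Module Finset

variable {F : Type*} [Field F] [Fintype F] {t : ℕ} {m n : Fin t → ℕ}

lemma sum_mn_eq (m n : Fin t → ℕ) : ∑ i, m i * n i = ∑ i ∈ range t, mmf m i * nnf n i := by
  rw [sum_fin_eq_range (fun i => m i * n i)]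
  refine Finset.sum_congr rfl fun i hi => ?_
  simp only [Finset.mem_range] at hi
  simp [mmf, nnf, hi]

/-- The generalized weights of the ambient space. -/
lemma gw_top (hm_mono : ∀ i j : Fin t, i ≤ j → m j ≤ m i) (hmn : ∀ i, n i ≤ m i)
    (s : ℕ) (hs1 : 1 ≤ s) (hs2 : s ≤ ∑ i, m i * n i) :
    gw (⊤ : Submodule F (∀ i : Fin t, Matrix (Fin (m i)) (Fin (n i)) F)) s = lvf m n s := by
  have hs2' : s ≤ cf m n (NPf n t) := by
    rw [cf_top, ← sum_mn_eq]; exact hs2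
  have hSne : {v' | s ≤ cf m n v'}.Nonempty := ⟨NPf n t, hs2'⟩
  set v := lvf m n s with hv
  have hcv : s ≤ cf m n v := Nat.sInf_mem hSne
  have hvNP : v ≤ NPf n t := Nat.sInf_le hs2'
  -- the greedy anticode profile
  set u : Fin t → ℕ := fun i => min v (NPf n (i.1 + 1)) - min v (NPf n i.1) with hu
  have hu_le : ∀ i, u i ≤ n i := by
    intro i
    have h3 : NPf n (i.1 + 1) = NPf n i.1 + nnf n i.1 := NPf_succ _
    have h4 : nnf n i.1 = n i := by simp [nnf, i.isLt]
    simp only [hu]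
    omega
  have hsum_u : ∑ i, u i = v := by
    rw [sum_fin_eq_range u,
      show (∑ i ∈ range t, if h : i < t then u ⟨i, h⟩ else 0) =
        ∑ i ∈ range t, (min v (NPf n (i + 1)) - min v (NPf n i)) from
        Finset.sum_congr rfl fun i hi => by simp [Finset.mem_range.1 hi, hu],
      telescope_min]
    omega
  have hsum_mu : ∑ i, m i * u i = cf m n v := by
    rw [sum_fin_eq_range (fun i => m i * u i), cf]
    refine Finset.sum_congr rfl fun i hi => ?_
    simp [Finset.mem_range.1 hi, hu, mmf]
  have hex := fun i => exists_optAnticode (F := F) (m i) (n i) (u i)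
    (le_trans (hu_le i) (hmn i)) (hu_le i)
  choose 𝒜 hopt hmax hfr using hex
  have hfrD : finrank F (Submodule.pi Set.univ 𝒜) = cf m n v := by
    rw [finrank_pi_submodule, ← hsum_mu]
    exact Finset.sum_congr rfl fun i _ => by rw [hfr i]
  have hcw : codeWt (Submodule.pi Set.univ 𝒜) ≤ v := by
    refine Nat.sInf_le ⟨𝒜, hopt, le_rfl, ?_⟩
    rw [maxsrk_pi, ← hsum_u]
    exact Finset.sum_congr rfl fun i _ => hmax i
  have hub_gw : gw (⊤ : Submodule F (∀ i : Fin t, Matrix (Fin (m i)) (Fin (n i)) F)) s ≤ v :=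
    le_trans (Nat.sInf_le ⟨Submodule.pi Set.univ 𝒜, le_top, by rw [hfrD]; exact hcv, rfl⟩) hcw
  refine le_antisymm hub_gw ?_
  -- lower bound
  have hne_gw : {w | ∃ 𝒟 : Submodule F (∀ i : Fin t, Matrix (Fin (m i)) (Fin (n i)) F),
      𝒟 ≤ ⊤ ∧ s ≤ Module.finrank F 𝒟 ∧ codeWt 𝒟 = w}.Nonempty :=
    ⟨codeWt (Submodule.pi Set.univ 𝒜), Submodule.pi Set.univ 𝒜, le_top,
      by rw [hfrD]; exact hcv, rfl⟩
  have hmem := Nat.sInf_mem hne_gw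
  obtain ⟨𝒟₀, -, hfr0, hcw0⟩ := hmem
  rw [gw]
  rw [← hcw0]
  -- codeWt 𝒟₀ analysis
  have hne_cw : {w | ∃ ℬ : ∀ i : Fin t, Submodule F (Matrix (Fin (m i)) (Fin (n i)) F),
      (∀ i, IsOptAnticode (ℬ i)) ∧ 𝒟₀ ≤ Submodule.pi Set.univ ℬ ∧
        maxsrk (Submodule.pi Set.univ ℬ) = w}.Nonempty := by
    refine ⟨maxsrk (Submodule.pi Set.univ fun i =>
        (⊤ : Submodule F (Matrix (Fin (m i)) (Fin (n i)) F))),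
      fun i => ⊤, fun i => isOptAnticode_top (hmn i), ?_, rfl⟩
    rw [Submodule.pi_top]
    exact le_top
  have hmem2 := Nat.sInf_mem hne_cw
  obtain ⟨ℬ, hoptB, hleB, hmaxB⟩ := hmem2
  rw [codeWt, ← hmaxB]
  rw [maxsrk_pi]
  -- the maxrank profile of ℬ
  have hu1 : ∀ i, maxrank (ℬ i) ≤ n i := fun i => maxrank_le_width _
  have hfrB : finrank F (Submodule.pi Set.univ ℬ) = ∑ i, m i * maxrank (ℬ i) := by
    rw [finrank_pi_submodule]
    exact Finset.sum_congr rfl fun i _ => hoptB i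
  have hsB : s ≤ ∑ i, m i * maxrank (ℬ i) := by
    rw [← hfrB]
    exact le_trans hfr0 (Submodule.finrank_mono hleB)
  have hkey : s ≤ cf m n (∑ i, maxrank (ℬ i)) :=
    le_trans hsB (greedy_bound hm_mono _ hu1)
  exact Nat.sInf_le hkey

end GwTop
section Main

open Module Finset

variable {F : Type*} [Field F] [Fintype F] {t : ℕ} {m n : Fin t → ℕ}

lemma lvf_spec1 {s : ℕ} (hs : s ≤ cf m n (NPf n t)) : s ≤ cf m n (lvf m n s) :=
  Nat.sInf_mem (⟨_, hs⟩ : {v | s ≤ cf m n v}.Nonempty)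

lemma lvf_spec2 {s v' : ℕ} (h : v' < lvf m n s) : cf m n v' < s := by
  by_contra hge
  have h2 : lvf m n s ≤ v' :=
    Nat.sInf_le (show v' ∈ {v | s ≤ cf m n v} from not_lt.1 hge)
  omega

lemma hphi_add {k K : ℕ} {φ : Fin k → Fin K} (hφ : StrictMono φ) :
    ∀ (r : Fin k) (a : ℕ) (h : r.1 + a < k), (φ r).1 + a ≤ (φ ⟨r.1 + a, h⟩).1 := by
  intro r a
  induction a with
  | zero =>
    intro h
    have he : (⟨r.1 + 0, h⟩ : Fin k) = r := by ext; simp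
    rw [he]
    omega
  | succ a ih =>
    intro h
    have ha : r.1 + a < k := by omega
    have h1 := ih ha
    have h2 : φ ⟨r.1 + a, ha⟩ < φ ⟨r.1 + (a + 1), h⟩ := hφ (Fin.mk_lt_mk.2 (by omega))
    rw [Fin.lt_def] at h2
    omega

theorem subseq_of_ambient_iff' (ht : 0 < t)
    (hm_mono : ∀ i j : Fin t, i ≤ j → m j ≤ m i)
    (hn_pos : ∀ i, 0 < n i) (hmn : ∀ i, n i ≤ m i)
    (k : ℕ) (d : Fin k → ℕ) (hmono : Monotone d) (hpos : ∀ r, 1 ≤ d r)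
    (hub : ∀ r, d r ≤ ∑ i, n i) :
    IsSubseq d (fun r : Fin (Module.finrank F (∀ i : Fin t, Matrix (Fin (m i)) (Fin (n i)) F)) =>
        gw (⊤ : Submodule F (∀ i : Fin t, Matrix (Fin (m i)) (Fin (n i)) F)) (r.1 + 1)) ↔
      ∀ j : Fin t, ∀ r : Fin k, ∀ h : r.1 + m j < k,
        ∑ i ∈ Finset.Iio j, n i < d ⟨r.1 + m j, h⟩ → d r + 1 ≤ d ⟨r.1 + m j, h⟩ := by
  have hfinrank : Module.finrank F (∀ i : Fin t, Matrix (Fin (m i)) (Fin (n i)) F)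
      = ∑ i, m i * n i := by
    rw [Module.finrank_pi_fintype]
    simp [Module.finrank_matrix]
  have hcftop : cf m n (NPf n t) = ∑ i, m i * n i := by rw [cf_top, ← sum_mn_eq]
  have hv_le : ∀ r, d r ≤ NPf n t := fun r => by
    have := hub r
    rwa [sum_n_eq_NPf] at this
  constructor
  · -- subsequence implies the condition
    rintro ⟨φ, hφ, hdφ⟩ j r h hgt
    have hd_eq : ∀ r' : Fin k, d r' = lvf m n ((φ r').1 + 1) := by
      intro r'
      have h1 : d r' = gw (⊤ : Submodule F (∀ i : Fin t, Matrix (Fin (m i)) (Fin (n i)) F))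
          ((φ r').1 + 1) := hdφ r'
      have h2 := (φ r').isLt
      rw [h1, gw_top hm_mono hmn _ (Nat.le_add_left 1 _) (by omega)]
    by_contra hlt
    have hle : d r ≤ d ⟨r.1 + m j, h⟩ := hmono (Fin.le_def.2 (by simp))
    have heq : d ⟨r.1 + m j, h⟩ = d r := by omega
    have hv1 : 1 ≤ d r := hpos r
    have hv2 : d r ≤ NPf n t := hv_le r
    have hss' : (φ r).1 + m j ≤ (φ ⟨r.1 + m j, h⟩).1 := hphi_add hφ r (m j) h
    have hs'top : (φ ⟨r.1 + m j, h⟩).1 + 1 ≤ cf m n (NPf n t) := by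
      have := (φ ⟨r.1 + m j, h⟩).isLt
      omega
    have hlv : lvf m n ((φ r).1 + 1) = d r := (hd_eq r).symm
    have hlv' : lvf m n ((φ ⟨r.1 + m j, h⟩).1 + 1) = d r := by
      rw [← hd_eq ⟨r.1 + m j, h⟩]; omega
    have hcv' : (φ ⟨r.1 + m j, h⟩).1 + 1 ≤ cf m n (d r) := by
      rw [← hlv']; exact lvf_spec1 hs'top
    have hcv1 : cf m n (d r - 1) < (φ r).1 + 1 := lvf_spec2 (by omega)
    obtain ⟨jj, hjj, hbl, hbr⟩ := exists_block hv1 hv2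
    have hcs : cf m n (d r) = cf m n (d r - 1) + m ⟨jj, hjj⟩ := by
      have := cf_succ (m := m) (n := n) (v := d r - 1) hjj (by omega) (by omega)
      rwa [show d r - 1 + 1 = d r by omega] at this
    rw [NPf_eq_Iio] at hgt
    have hjle : j.1 ≤ jj := by
      by_contra hgt2
      have : NPf n (jj + 1) ≤ NPf n j.1 := NPf_mono (by omega)
      omega
    have hmj : m ⟨jj, hjj⟩ ≤ m j := hm_mono j ⟨jj, hjj⟩ (Fin.le_def.2 hjle)
    omega
  · -- the condition implies subsequence
    intro hcond
    have hblock : ∀ r : Fin k, ∃ jj, ∃ hjj : jj < t,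
        NPf n jj < d r ∧ d r ≤ NPf n (jj + 1) :=
      fun r => exists_block (hpos r) (hv_le r)
    choose jb hjb hbl hbr using hblock
    set occ : Fin k → ℕ :=
      fun r => (Finset.univ.filter (fun r' : Fin k => r < r' ∧ d r' = d r)).card with hocc_def
    have hocc_eq : ∀ r : Fin k,
        occ r = (Finset.univ.filter (fun r' : Fin k => r < r' ∧ d r' = d r)).card :=
      fun _ => rfl
    have hm1 : ∀ r : Fin k, 1 ≤ m ⟨jb r, hjb r⟩ :=
      fun r => le_trans (hn_pos _) (hmn _)
    have hocc : ∀ r : Fin k, occ r < m ⟨jb r, hjb r⟩ := by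
      intro r
      by_contra hge
      rw [not_lt, hocc_eq r] at hge
      have hex : ∃ r' : Fin k, (r < r' ∧ d r' = d r) ∧ r.1 + m ⟨jb r, hjb r⟩ ≤ r'.1 := by
        by_contra hall
        push_neg at hall
        have hsub : (Finset.univ.filter (fun r' : Fin k => r < r' ∧ d r' = d r)).image Fin.val
            ⊆ Finset.Ioo r.1 (r.1 + m ⟨jb r, hjb r⟩) := by
          intro x hx
          simp only [Finset.mem_image, Finset.mem_filter] at hx
          obtain ⟨r', ⟨-, hr1, hr2⟩, rfl⟩ := hx
          have := hall r' ⟨hr1, hr2⟩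
          rw [Fin.lt_def] at hr1
          simp only [Finset.mem_Ioo]
          omega
        have hcard := Finset.card_le_card hsub
        rw [Finset.card_image_of_injective _ Fin.val_injective, Nat.card_Ioo] at hcard
        have := hm1 r
        omega
      obtain ⟨r', ⟨hrr', hdr'⟩, hge'⟩ := hex
      have h' : r.1 + m ⟨jb r, hjb r⟩ < k := by have := r'.isLt; omega
      have hmid1 : d r ≤ d ⟨r.1 + m ⟨jb r, hjb r⟩, h'⟩ := hmono (Fin.le_def.2 (by simp))
      have hmid2 : d ⟨r.1 + m ⟨jb r, hjb r⟩, h'⟩ ≤ d r' := hmono (Fin.le_def.2 (by simpa using hge'))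
      have hpre : ∑ i ∈ Finset.Iio (⟨jb r, hjb r⟩ : Fin t), n i
          < d ⟨r.1 + m ⟨jb r, hjb r⟩, h'⟩ := by
        rw [NPf_eq_Iio]
        have := hbl r
        simp only
        omega
      have := hcond ⟨jb r, hjb r⟩ r h' hpre
      omega
    have hcf_succ : ∀ r : Fin k, cf m n (d r) = cf m n (d r - 1) + m ⟨jb r, hjb r⟩ := by
      intro r
      have h1 := hbl r
      have h2 := hbr r
      have h3 := hpos r
      have := cf_succ (m := m) (n := n) (v := d r - 1) (hjb r) (by omega) (by omega)
      rwa [show d r - 1 + 1 = d r by omega] at this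
    set φval : Fin k → ℕ := fun r => cf m n (d r) - 1 - occ r with hφval
    have hφval_eq : ∀ r : Fin k, φval r = cf m n (d r) - 1 - occ r := fun _ => rfl
    have hbound1 : ∀ r : Fin k, cf m n (d r - 1) ≤ φval r ∧ φval r + 1 ≤ cf m n (d r) := by
      intro r
      have h1 := hcf_succ r
      have h2 := hocc r
      have h3 := hm1 r
      have h4 := hφval_eq r
      constructor <;> omega
    have hlt_fr : ∀ r : Fin k, φval r <
        Module.finrank F (∀ i : Fin t, Matrix (Fin (m i)) (Fin (n i)) F) := by
      intro r
      have h1 := (hbound1 r).2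
      have h2 : cf m n (d r) ≤ cf m n (NPf n t) := cf_mono (hv_le r)
      omega
    refine ⟨fun r => ⟨φval r, hlt_fr r⟩, ?_, ?_⟩
    · -- strict monotonicity
      intro r r' hrr
      rw [Fin.lt_def]
      simp only
      have hle : d r ≤ d r' := hmono hrr.le
      rcases eq_or_lt_of_le hle with heq | hlt
      · -- equal values: occurrence counts decrease
        have hsub : insert r' (Finset.univ.filter (fun x : Fin k => r' < x ∧ d x = d r'))
            ⊆ Finset.univ.filter (fun x : Fin k => r < x ∧ d x = d r) := by
          intro x hx
          rcases Finset.mem_insert.1 hx with rfl | hx'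
          · simp only [Finset.mem_filter, Finset.mem_univ, true_and]
            exact ⟨hrr, heq.symm⟩
          · simp only [Finset.mem_filter, Finset.mem_univ, true_and] at hx' ⊢
            exact ⟨hrr.trans hx'.1, by rw [hx'.2, heq]⟩
        have hni : r' ∉ Finset.univ.filter (fun x : Fin k => r' < x ∧ d x = d r') := by
          simp [lt_irrefl]
        have hocclt : occ r' + 1 ≤ occ r := by
          rw [hocc_eq r, hocc_eq r', ← Finset.card_insert_of_notMem hni]
          exact Finset.card_le_card hsub
        have h1 := hcf_succ r
        have h2 := hocc r
        have h3 := hm1 r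
        have h4 := hφval_eq r
        have h5 := hφval_eq r'
        rw [← heq] at h5
        omega
      · -- strictly increasing values
        have h1 := (hbound1 r).2
        have h2 := (hbound1 r').1
        have h3 : cf m n (d r) ≤ cf m n (d r' - 1) := cf_mono (by omega)
        omega
    · -- values match
      intro r
      simp only
      rw [gw_top hm_mono hmn _ (by omega) (by have := hlt_fr r; omega)]
      have hmem : φval r + 1 ≤ cf m n (d r) := (hbound1 r).2
      have hmin : ∀ v' ∈ {v | φval r + 1 ≤ cf m n v}, d r ≤ v' := by
        intro v' hv'
        simp only [Set.mem_setOf_eq] at hv'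
        by_contra hlt
        have h1 : cf m n v' ≤ cf m n (d r - 1) := cf_mono (by omega)
        have h2 := (hbound1 r).1
        omega
      exact le_antisymm (le_csInf ⟨d r, hmem⟩ hmin) (Nat.sInf_le hmem)

end Main

/-- A non-decreasing sequence of positive integers `d_1 ≤ ⋯ ≤ d_k` with `d_k ≤ n_1 + ⋯ + n_t`
is a subsequence of the sequence of generalized sum-rank weights of `𝕄` if and only if for all
`j ∈ [t]` and `r ∈ [k - m j]`, `d_{r + m j} > n_1 + ⋯ + n_{j-1}` implies
`d_{r + m j} ≥ d_r + 1`. -/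
theorem subseq_of_ambient_iff (ht : 0 < t)
    (hm_mono : ∀ i j : Fin t, i ≤ j → m j ≤ m i)
    (hn_pos : ∀ i, 0 < n i) (hmn : ∀ i, n i ≤ m i)
    (k : ℕ) (d : Fin k → ℕ) (hmono : Monotone d) (hpos : ∀ r, 1 ≤ d r)
    (hub : ∀ r, d r ≤ ∑ i, n i) :
    IsSubseq d (fun r : Fin (Module.finrank F (∀ i : Fin t, Matrix (Fin (m i)) (Fin (n i)) F)) =>
        gw (⊤ : Submodule F (∀ i : Fin t, Matrix (Fin (m i)) (Fin (n i)) F)) (r.1 + 1)) ↔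
      ∀ j : Fin t, ∀ r : Fin k, ∀ h : r.1 + m j < k,
        ∑ i ∈ Finset.Iio j, n i < d ⟨r.1 + m j, h⟩ → d r + 1 ≤ d ⟨r.1 + m j, h⟩ := by
  exact subseq_of_ambient_iff' ht hm_mono hn_pos hmn k d hmono hpos hub
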